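/- arXiv:1205.5701 — 3 statements merged into one kernel-verified Lean document; each statement's English description precedes it below -/
import Mathlib

section
/- Nonexistence of traveling waves at nonzero speed in the B-model without external force. Let W : ℝ³ → ℝ be a smooth, spherically symmetric Schwartz function with ∫_{ℝ³} W(x) dx ≠ 0, let ν ≠ 0 and let v ∈ ℝ³ with v ≠ 0. Then there is no twice continuously differentiable function γ : ℝ³ → ℂ with γ, ∇γ, Δγ ∈ L¹(ℝ³) satisfying the traveling-wave equation −i v·∇γ(x) = −(1/2)(Δγ)(x) + ν W(x) for all x ∈ ℝ³. (Equivalently: for every v ≠ 0 there is no traveling-wave solution X_t = vt + X₀, P_t ≡ v, β_t(x) = γ(x − X_t) of the B-model equations with V ≡ 0 and integrable profile γ.) -/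
/- STATEMENT 4: Nonexistence of traveling waves at nonzero speed in the B-model
without external force.  For W smooth, spherically symmetric Schwartz with ∫W ≠ 0,
ν ≠ 0 and v ≠ 0, there is no C² profile γ with γ, ∇γ, Δγ ∈ L¹ satisfying
  −i v·∇γ(x) = −(1/2)Δγ(x) + νW(x)   for all x ∈ ℝ³. -/

open MeasureTheory Filter Topology ENNReal RealInnerProductSpace

set_option maxHeartbeats 1000000

noncomputable section

abbrev E3 := EuclideanSpace ℝ (Fin 3)

/-- The Laplacian of a complex-valued function on ℝ³. -/
def lapC (f : E3 → ℂ) (x : E3) : ℂ :=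
  ∑ i : Fin 3, iteratedFDeriv ℝ 2 f x ![EuclideanSpace.single i 1, EuclideanSpace.single i 1]

open FourierTransform in
/-- For an integrable `C¹` function with integrable derivative on `ℝ³`, the integral of any
directional derivative vanishes. -/
lemma integral_fderiv_apply_zero {f : E3 → ℂ} (hf : Integrable f)
    (h'f : Differentiable ℝ f) (hf' : Integrable (fderiv ℝ f)) (u : E3) :
    ∫ x : E3, fderiv ℝ f x u = 0 := by
  have h := Real.fourier_fderiv hf h'f hf'
  have h2 : (∫ x : E3, fderiv ℝ f x) = 0 := by
    have h0 : 𝓕 (fderiv ℝ f) 0 = ∫ x : E3, fderiv ℝ f x := by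
      rw [Real.fourier_eq]
      simp
    rw [← h0, h]
    ext y
    simp [VectorFourier.fourierSMulRight]
  rw [← ContinuousLinearMap.integral_apply hf' u, h2, ContinuousLinearMap.zero_apply]

/-- For a `C²` function on `ℝ³` with integrable gradient and integrable Laplacian,
the integral of the Laplacian vanishes. -/
lemma integral_lapC_eq_zero {γ : E3 → ℂ} (hγ : ContDiff ℝ 2 γ)
    (hfd : Integrable (fun x => fderiv ℝ γ x) (volume : Measure E3))
    (hlap : Integrable (lapC γ) (volume : Measure E3)) :
    ∫ x : E3, lapC γ x = 0 := by
  classical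
  set e : Fin 3 → E3 := fun i => EuclideanSpace.single i (1 : ℝ) with he
  set g : Fin 3 → E3 → ℂ := fun i x => fderiv ℝ γ x (e i) with hg
  have hγ1 : ContDiff ℝ 1 (fderiv ℝ γ) := hγ.fderiv_right (le_refl 2)
  have hgC1 : ∀ i, ContDiff ℝ 1 (g i) := fun i =>
    (ContinuousLinearMap.apply ℝ ℂ (e i)).contDiff.comp hγ1
  have hgdiff : ∀ i, Differentiable ℝ (g i) := fun i => (hgC1 i).differentiable one_ne_zero
  have hgint : ∀ i, Integrable (g i) := fun i => hfd.apply_continuousLinearMap (e i)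
  -- second derivative identity
  have hd2 : ∀ (i) (x : E3), fderiv ℝ (g i) x (e i)
      = iteratedFDeriv ℝ 2 γ x ![e i, e i] := by
    intro i x
    rw [iteratedFDeriv_two_apply]
    have h1 : DifferentiableAt ℝ (fderiv ℝ γ) x := (hγ1.differentiable one_ne_zero) x
    have h2 : fderiv ℝ (g i) x = (fderiv ℝ (fderiv ℝ γ) x).flip (e i) := by
      have := fderiv_clm_apply h1 (differentiableAt_const (e i))
      simpa [hg] using this
    simp [h2]
  have hlapeq : ∀ x : E3, lapC γ x = ∑ i : Fin 3, fderiv ℝ (g i) x (e i) := by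
    intro x
    rw [lapC]
    exact Finset.sum_congr rfl fun i _ => (hd2 i x).symm
  -- cutoff function
  let χ : ContDiffBump (0 : E3) := ⟨1, 2, one_pos, one_lt_two⟩
  have hχc : ContDiff ℝ 2 (χ : E3 → ℝ) := χ.contDiff
  have hχd : Differentiable ℝ (χ : E3 → ℝ) := hχc.differentiable two_ne_zero
  obtain ⟨M, hM⟩ := (hχc.continuous_fderiv two_ne_zero).bounded_above_of_compact_support
    (χ.hasCompactSupport.fderiv ℝ)
  have hM0 : (0 : ℝ) ≤ M := le_trans (norm_nonneg _) (hM 0)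
  set φ : ℕ → E3 → ℝ := fun n x => χ (((n : ℝ) + 1)⁻¹ • x) with hφdef
  have hcpos : ∀ n : ℕ, (0 : ℝ) < (n : ℝ) + 1 := fun n => by positivity
  have hφsm : ∀ n, ContDiff ℝ 2 (φ n) := fun n =>
    hχc.comp (contDiff_const_smul _)
  have hφcs : ∀ n, HasCompactSupport (φ n) := by
    intro n
    apply HasCompactSupport.intro (isCompact_closedBall (0 : E3) (2 * ((n : ℝ) + 1)))
    intro x hx
    apply χ.zero_of_le_dist
    simp only [Metric.mem_closedBall, dist_zero_right, not_le] at hx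
    rw [dist_zero_right, norm_smul, norm_inv, Real.norm_eq_abs, abs_of_pos (hcpos n)]
    show (2 : ℝ) ≤ _
    rw [le_inv_mul_iff₀ (hcpos n)]
    nlinarith [hcpos n]
  -- derivative of the cutoff
  have hφd : ∀ (n : ℕ) (x : E3), fderiv ℝ (φ n) x
      = ((n : ℝ) + 1)⁻¹ • fderiv ℝ (χ : E3 → ℝ) (((n : ℝ) + 1)⁻¹ • x) := by
    intro n x
    have h1 : HasFDerivAt (fun y : E3 => ((n : ℝ) + 1)⁻¹ • y)
        (((n : ℝ) + 1)⁻¹ • ContinuousLinearMap.id ℝ E3) x := (hasFDerivAt_id x).const_smul ((n : ℝ) + 1)⁻¹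
    have h2 : HasFDerivAt (χ : E3 → ℝ)
        (fderiv ℝ (χ : E3 → ℝ) (((n : ℝ) + 1)⁻¹ • x)) (((n : ℝ) + 1)⁻¹ • x) :=
      (hχd _).hasFDerivAt
    have h3 := h2.comp x h1
    have h4 := h3.fderiv
    rw [show ((χ : E3 → ℝ) ∘ fun y : E3 => ((n : ℝ) + 1)⁻¹ • y) = φ n from rfl] at h4
    rw [h4]
    ext y
    simp [mul_comm]
  have hφdb : ∀ (n : ℕ) (x : E3), ‖fderiv ℝ (φ n) x‖ ≤ ((n : ℝ) + 1)⁻¹ * M := by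
    intro n x
    rw [hφd, norm_smul, norm_inv, Real.norm_eq_abs, abs_of_pos (hcpos n)]
    exact mul_le_mul_of_nonneg_left (hM _) (by positivity)
  have hφ1 : ∀ (n : ℕ) (x : E3), ‖x‖ ≤ (n : ℝ) + 1 → φ n x = 1 := by
    intro n x hx
    apply χ.one_of_mem_closedBall
    rw [Metric.mem_closedBall, dist_zero_right, norm_smul, norm_inv, Real.norm_eq_abs,
      abs_of_pos (hcpos n)]
    show _ ≤ (1 : ℝ)
    calc ((n : ℝ) + 1)⁻¹ * ‖x‖ ≤ ((n : ℝ) + 1)⁻¹ * ((n : ℝ) + 1) :=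
          mul_le_mul_of_nonneg_left hx (by positivity)
      _ = 1 := inv_mul_cancel₀ (hcpos n).ne'
  -- integrability of the pieces
  have hAint : ∀ (n : ℕ) (i : Fin 3),
      Integrable (fun x : E3 => φ n x • fderiv ℝ (g i) x (e i)) := by
    intro n i
    apply Continuous.integrable_of_hasCompactSupport
    · exact ((hφsm n).continuous).smul
        ((ContinuousLinearMap.apply ℝ ℂ (e i)).continuous.comp
          ((hgC1 i).continuous_fderiv one_ne_zero))
    · exact (hφcs n).smul_right
  have hBint : ∀ (n : ℕ) (i : Fin 3),
      Integrable (fun x : E3 => (fderiv ℝ (φ n) x (e i)) • g i x) := by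
    intro n i
    apply Continuous.integrable_of_hasCompactSupport
    · exact ((ContinuousLinearMap.apply ℝ ℝ (e i)).continuous.comp
        ((hφsm n).continuous_fderiv two_ne_zero)).smul (hgC1 i).continuous
    · exact ((hφcs n).fderiv_apply ℝ (e i)).smul_right
  -- integration by parts via the vanishing of the integral of a derivative
  have key : ∀ (n : ℕ) (i : Fin 3),
      (∫ x : E3, φ n x • fderiv ℝ (g i) x (e i))
        = - ∫ x : E3, (fderiv ℝ (φ n) x (e i)) • g i x := by
    intro n i
    set F : E3 → ℂ := fun x => φ n x • g i x with hF
    have hFc1 : ContDiff ℝ 1 F := ((hφsm n).of_le one_le_two).smul (hgC1 i)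
    have hFcs : HasCompactSupport F := (hφcs n).smul_right
    have hFint : Integrable F := hFc1.continuous.integrable_of_hasCompactSupport hFcs
    have hFd : Integrable (fderiv ℝ F) :=
      (hFc1.continuous_fderiv one_ne_zero).integrable_of_hasCompactSupport (hFcs.fderiv ℝ)
    have h0 := integral_fderiv_apply_zero hFint (hFc1.differentiable one_ne_zero) hFd (e i)
    have hptw : ∀ x : E3, fderiv ℝ F x (e i)
        = (fderiv ℝ (φ n) x (e i)) • g i x + φ n x • fderiv ℝ (g i) x (e i) := by
      intro x
      rw [hF, fderiv_fun_smul (𝕜' := ℝ) (((hφsm n).differentiable two_ne_zero) x) (hgdiff i x)]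
      simp [add_comm]
    simp_rw [hptw] at h0
    rw [integral_add (hBint n i) (hAint n i)] at h0
    exact eq_neg_of_add_eq_zero_right h0
  have keysum : ∀ n : ℕ, (∫ x : E3, φ n x • lapC γ x)
      = - ∑ i : Fin 3, ∫ x : E3, (fderiv ℝ (φ n) x (e i)) • g i x := by
    intro n
    have h1 : ∀ x : E3, φ n x • lapC γ x
        = ∑ i : Fin 3, φ n x • fderiv ℝ (g i) x (e i) := by
      intro x
      rw [hlapeq, Finset.smul_sum]
    calc (∫ x : E3, φ n x • lapC γ x)
        = ∑ i : Fin 3, ∫ x : E3, φ n x • fderiv ℝ (g i) x (e i) := by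
          simp_rw [h1]
          exact integral_finset_sum _ fun i _ => hAint n i
      _ = ∑ i : Fin 3, - ∫ x : E3, (fderiv ℝ (φ n) x (e i)) • g i x :=
          Finset.sum_congr rfl fun i _ => key n i
      _ = - ∑ i : Fin 3, ∫ x : E3, (fderiv ℝ (φ n) x (e i)) • g i x := by
          rw [Finset.sum_neg_distrib]
  -- continuity of the Laplacian
  have hlapcont : Continuous (lapC γ) := by
    have : (lapC γ) = fun x => ∑ i : Fin 3, fderiv ℝ (g i) x (e i) := funext hlapeq
    rw [this]
    exact continuous_finset_sum _ fun i _ =>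
      (ContinuousLinearMap.apply ℝ ℂ (e i)).continuous.comp
        ((hgC1 i).continuous_fderiv one_ne_zero)
  -- limit of the left-hand side
  have T1 : Tendsto (fun n : ℕ => ∫ x : E3, φ n x • lapC γ x) atTop
      (𝓝 (∫ x : E3, lapC γ x)) := by
    apply tendsto_integral_of_dominated_convergence (fun x => ‖lapC γ x‖)
    · intro n
      exact (((hφsm n).continuous).smul hlapcont).aestronglyMeasurable
    · exact hlap.norm
    · intro n
      filter_upwards with x
      rw [norm_smul, Real.norm_eq_abs, abs_of_nonneg χ.nonneg]
      exact mul_le_of_le_one_left (norm_nonneg _) χ.le_one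
    · filter_upwards with x
      apply Tendsto.congr' _ tendsto_const_nhds
      filter_upwards [eventually_ge_atTop ⌈‖x‖⌉₊] with n hn
      have hxn : ‖x‖ ≤ (n : ℝ) + 1 := by
        calc ‖x‖ ≤ (⌈‖x‖⌉₊ : ℝ) := Nat.le_ceil _
          _ ≤ (n : ℝ) := Nat.cast_le.mpr hn
          _ ≤ (n : ℝ) + 1 := by linarith
      rw [hφ1 n x hxn, one_smul]
  -- limit of the right-hand side
  have T2 : Tendsto (fun n : ℕ =>
      ∑ i : Fin 3, ∫ x : E3, (fderiv ℝ (φ n) x (e i)) • g i x) atTop (𝓝 0) := by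
    have hb : ∀ (n : ℕ) (i : Fin 3),
        ‖∫ x : E3, (fderiv ℝ (φ n) x (e i)) • g i x‖
          ≤ ((n : ℝ) + 1)⁻¹ * (M * ∫ x : E3, ‖g i x‖) := by
      intro n i
      have hle : ∀ x : E3, ‖(fderiv ℝ (φ n) x (e i)) • g i x‖
          ≤ (((n : ℝ) + 1)⁻¹ * M) * ‖g i x‖ := by
        intro x
        rw [norm_smul]
        apply mul_le_mul_of_nonneg_right _ (norm_nonneg _)
        calc ‖fderiv ℝ (φ n) x (e i)‖ ≤ ‖fderiv ℝ (φ n) x‖ * ‖e i‖ :=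
              (fderiv ℝ (φ n) x).le_opNorm _
          _ = ‖fderiv ℝ (φ n) x‖ := by
              rw [he, EuclideanSpace.norm_single, norm_one, mul_one]
          _ ≤ ((n : ℝ) + 1)⁻¹ * M := hφdb n x
      calc ‖∫ x : E3, (fderiv ℝ (φ n) x (e i)) • g i x‖
          ≤ ∫ x : E3, (((n : ℝ) + 1)⁻¹ * M) * ‖g i x‖ :=
            norm_integral_le_of_norm_le ((hgint i).norm.const_mul _)
              (Filter.Eventually.of_forall hle)
        _ = ((n : ℝ) + 1)⁻¹ * (M * ∫ x : E3, ‖g i x‖) := by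
            rw [MeasureTheory.integral_const_mul, mul_assoc]
    have hgt : Tendsto (fun n : ℕ =>
        ((n : ℝ) + 1)⁻¹ * ∑ i : Fin 3, (M * ∫ x : E3, ‖g i x‖)) atTop (𝓝 0) := by
      have h1 : Tendsto (fun n : ℕ => ((n : ℝ) + 1)⁻¹) atTop (𝓝 0) := by
        simpa [one_div] using tendsto_one_div_add_atTop_nhds_zero_nat (𝕜 := ℝ)
      simpa using h1.mul_const (∑ i : Fin 3, (M * ∫ x : E3, ‖g i x‖))
    refine squeeze_zero_norm (fun n => ?_) hgt
    calc ‖∑ i : Fin 3, ∫ x : E3, (fderiv ℝ (φ n) x (e i)) • g i x‖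
          ≤ ∑ i : Fin 3, ‖∫ x : E3, (fderiv ℝ (φ n) x (e i)) • g i x‖ :=
            norm_sum_le _ _
        _ ≤ ∑ i : Fin 3, ((n : ℝ) + 1)⁻¹ * (M * ∫ x : E3, ‖g i x‖) :=
            Finset.sum_le_sum fun i _ => hb n i
        _ = ((n : ℝ) + 1)⁻¹ * ∑ i : Fin 3, (M * ∫ x : E3, ‖g i x‖) := by
            rw [Finset.mul_sum]
  have T1' : Tendsto (fun n : ℕ =>
      - ∑ i : Fin 3, ∫ x : E3, (fderiv ℝ (φ n) x (e i)) • g i x) atTop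
      (𝓝 (∫ x : E3, lapC γ x)) := by
    apply T1.congr
    intro n
    exact keysum n
  have T2' : Tendsto (fun n : ℕ =>
      - ∑ i : Fin 3, ∫ x : E3, (fderiv ℝ (φ n) x (e i)) • g i x) atTop (𝓝 0) := by
    simpa using T2.neg
  exact tendsto_nhds_unique T1' T2'


theorem bmodel_no_traveling_wave
    (W : SchwartzMap E3 ℝ)
    (hWrad : ∀ x y : E3, ‖x‖ = ‖y‖ → W x = W y)
    (hWint : (∫ x : E3, W x) ≠ 0)
    (ν : ℝ) (hν : ν ≠ 0)
    (v : E3) (hv : v ≠ 0) :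
    ¬ ∃ γ : E3 → ℂ,
        ContDiff ℝ 2 γ ∧
        Integrable γ (volume : Measure E3) ∧
        Integrable (fun x => fderiv ℝ γ x) (volume : Measure E3) ∧
        Integrable (lapC γ) (volume : Measure E3) ∧
        ∀ x : E3, -Complex.I * (fderiv ℝ γ x v)
          = -(1/2) * lapC γ x + ((ν * W x : ℝ) : ℂ) := by
  rintro ⟨γ, hγ, hint, hfd, hlap, heq⟩
  have hL : (∫ x : E3, -Complex.I * fderiv ℝ γ x v) = 0 := by
    rw [MeasureTheory.integral_const_mul]
    rw [integral_fderiv_apply_zero hint (hγ.differentiable two_ne_zero) hfd v, mul_zero]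
  have hR : (∫ x : E3, (-(1/2) * lapC γ x + ((ν * W x : ℝ) : ℂ)))
      = ((ν * ∫ x : E3, W x : ℝ) : ℂ) := by
    have hWi : Integrable (fun x : E3 => ((ν * W x : ℝ) : ℂ)) :=
      Complex.ofRealCLM.integrable_comp (W.integrable.const_mul ν)
    rw [integral_add (hlap.const_mul (-(1/2) : ℂ)) hWi]
    rw [MeasureTheory.integral_const_mul, integral_lapC_eq_zero hγ hfd hlap, mul_zero, zero_add]
    calc (∫ x : E3, ((ν * W x : ℝ) : ℂ)) = (((∫ x : E3, ν * W x) : ℝ) : ℂ) :=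
          ContinuousLinearMap.integral_comp_comm Complex.ofRealCLM
            (W.integrable.const_mul ν)
      _ = ((ν * ∫ x : E3, W x : ℝ) : ℂ) := by rw [MeasureTheory.integral_const_mul]
  have : ((ν * ∫ x : E3, W x : ℝ) : ℂ) = 0 := by
    rw [← hR, ← hL]
    exact (integral_congr_ae (Filter.Eventually.of_forall fun x => heq x)).symm
  rw [Complex.ofReal_eq_zero] at this
  exact (mul_ne_zero hν hWint) this
end
end

section
/- Asymptotics of the friction force magnitude. Let W : ℝ³ → ℝ be a smooth, spherically symmetric Schwartz function and let Ŵ(k) := ∫ e^{−ik·x}W(x)dx (which is a radial real function, written Ŵ(r) for |k| = r). Define G : (0,∞) → ℝ by G(s) := s^{−2} ∫₀^{4s²} ρ |Ŵ(√ρ)|² dρ. Then G is continuous, G(s)/s² → 8|Ŵ(0)|² as s → 0⁺ (so |F_v| = O(|v|²) for small speeds), and s² G(s) → ∫₀^{∞} ρ |Ŵ(√ρ)|² dρ < ∞ as s → ∞ (so |F_v| = O(|v|^{−2}) for large speeds). -/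
/- STATEMENT 11: Asymptotics of the friction force magnitude.
For W smooth, spherically symmetric Schwartz, define
  G(s) := s⁻² ∫₀^{4s²} ρ |Ŵ(√ρ)|² dρ  on (0,∞).
Then G is continuous, G(s)/s² → 8|Ŵ(0)|² as s → 0⁺ (|F_v| = O(|v|²) at small speeds),
and s²G(s) → ∫₀^∞ ρ|Ŵ(√ρ)|² dρ < ∞ as s → ∞ (|F_v| = O(|v|⁻²) at large speeds). -/

open MeasureTheory Filter Topology ENNReal RealInnerProductSpace

noncomputable section

/-- Fourier transform  f̂(k) = ∫ e^{−ik·x} f(x) dx  of a real-valued function. -/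
def ftR (f : E3 → ℝ) (k : E3) : ℂ :=
  ∫ x : E3, Complex.exp (-Complex.I * (⟪k, x⟫ : ℂ)) * (f x : ℂ)

/-- A fixed unit vector, used to evaluate radial Fourier transforms: Ŵ(r) = Ŵ(r e₁). -/
def e₁ : E3 := EuclideanSpace.single (0 : Fin 3) (1:ℝ)

/-- The normalized friction force magnitude  G(s) = s⁻² ∫₀^{4s²} ρ |Ŵ(√ρ)|² dρ. -/
def G (W : E3 → ℝ) (s : ℝ) : ℝ :=
  (1 / s ^ 2) * ∫ ρ in (0:ℝ)..(4*s ^ 2), ρ * ‖ftR W (Real.sqrt ρ • e₁)‖ ^ 2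

/-- The complexification of a real Schwartz map. -/
def Wc (W : SchwartzMap E3 ℝ) : SchwartzMap E3 ℂ where
  toFun x := (W x : ℂ)
  smooth' := Complex.ofRealCLM.contDiff.comp (W.smooth ⊤)
  decay' := by
    intro k n
    obtain ⟨C, hC⟩ := W.decay' k n
    refine ⟨C, fun x => ?_⟩
    have h : ‖iteratedFDeriv ℝ n (fun y => ((W y : ℝ) : ℂ)) x‖ = ‖iteratedFDeriv ℝ n (⇑W) x‖ := by
      simpa [Function.comp_def] using
        Complex.ofRealLI.norm_iteratedFDeriv_comp_left (𝕜 := ℝ) (x := x) (W.smooth ⊤).contDiffAt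
          (by exact_mod_cast le_top : (n : WithTop ℕ∞) ≤ _)
    rw [h]
    exact hC x

lemma ftR_eq (W : SchwartzMap E3 ℝ) (k : E3) :
    ftR ⇑W k = (SchwartzMap.fourierTransformCLM ℂ (Wc W)) ((2 * Real.pi)⁻¹ • k) := by
  rw [SchwartzMap.fourierTransformCLM_apply, SchwartzMap.fourier_coe, Real.fourier_eq']
  unfold ftR
  congr 1
  ext v
  have hπ : (2 * Real.pi) ≠ 0 := by positivity
  have : ⟪v, (2 * Real.pi)⁻¹ • k⟫ = (2 * Real.pi)⁻¹ * ⟪k, v⟫ := by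
    rw [real_inner_smul_right, real_inner_comm]
  rw [smul_eq_mul]
  show Complex.exp (-Complex.I * (⟪k, v⟫ : ℂ)) * ((W v : ℝ) : ℂ)
      = Complex.exp (↑(-2 * Real.pi * ⟪v, (2 * Real.pi)⁻¹ • k⟫) * Complex.I) * (Wc W) v
  rw [this]
  have h2 : (-2 * Real.pi * ((2 * Real.pi)⁻¹ * ⟪k, v⟫)) = -⟪k, v⟫ := by
    field_simp
  rw [h2]
  have h3 : ((-⟪k, v⟫ : ℝ) : ℂ) * Complex.I = -Complex.I * ((⟪k, v⟫ : ℝ) : ℂ) := by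
    push_cast; ring
  rw [h3]
  rfl

lemma ftR_cont (W : SchwartzMap E3 ℝ) : Continuous (ftR ⇑W) := by
  have h : ftR ⇑W = fun k => (SchwartzMap.fourierTransformCLM ℂ (Wc W)) ((2 * Real.pi)⁻¹ • k) :=
    funext (ftR_eq W)
  rw [h]
  exact (SchwartzMap.continuous _).comp (continuous_const_smul _)

lemma ftR_decay (W : SchwartzMap E3 ℝ) :
    ∃ C : ℝ, 0 ≤ C ∧ ∀ k : E3, ‖k‖ ^ 3 * ‖ftR ⇑W k‖ ≤ C := by
  obtain ⟨C, hC⟩ := (SchwartzMap.fourierTransformCLM ℂ (Wc W)).decay' 3 0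
  refine ⟨(2 * Real.pi) ^ 3 * max C 0, by positivity, fun k => ?_⟩
  have h := hC ((2 * Real.pi)⁻¹ • k)
  rw [norm_iteratedFDeriv_zero] at h
  have hπ : (0:ℝ) < 2 * Real.pi := by positivity
  have hn : ‖(2 * Real.pi)⁻¹ • k‖ = (2 * Real.pi)⁻¹ * ‖k‖ := by
    rw [norm_smul, Real.norm_eq_abs, abs_of_pos (by positivity)]
  rw [ftR_eq]
  have hkey : ‖k‖ ^ 3 = (2 * Real.pi) ^ 3 * ‖(2 * Real.pi)⁻¹ • k‖ ^ 3 := by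
    rw [hn]; field_simp
  rw [hkey, mul_assoc]
  have : ‖(2 * Real.pi)⁻¹ • k‖ ^ 3 *
      ‖(SchwartzMap.fourierTransformCLM ℂ (Wc W)) ((2 * Real.pi)⁻¹ • k)‖ ≤ max C 0 :=
    le_trans h (le_max_left _ _)
  exact mul_le_mul_of_nonneg_left this (by positivity)

lemma norm_e₁ : ‖e₁‖ = 1 := by
  simp [e₁]

lemma F_cont (W : SchwartzMap E3 ℝ) :
    Continuous (fun ρ : ℝ => ρ * ‖ftR (⇑W) (Real.sqrt ρ • e₁)‖ ^ 2) :=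
  continuous_id.mul
    ((((ftR_cont W).comp (Real.continuous_sqrt.smul continuous_const)).norm).pow 2)

lemma F_int (W : SchwartzMap E3 ℝ) :
    IntegrableOn (fun ρ : ℝ => ρ * ‖ftR (⇑W) (Real.sqrt ρ • e₁)‖ ^ 2) (Set.Ioi 0)
      (volume : Measure ℝ) := by
  rw [show Set.Ioi (0:ℝ) = Set.Ioc 0 1 ∪ Set.Ioi 1 from
    (Set.Ioc_union_Ioi_eq_Ioi zero_le_one).symm, integrableOn_union]
  constructor
  · exact (F_cont W).integrableOn_Ioc
  · obtain ⟨C, hC0, hC⟩ := ftR_decay W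
    have hint : IntegrableOn (fun ρ : ℝ => C ^ 2 * ρ ^ (-2:ℝ)) (Set.Ioi 1) :=
      (integrableOn_Ioi_rpow_of_lt (by norm_num) one_pos).const_mul _
    refine Integrable.mono' hint ((F_cont W).aestronglyMeasurable.restrict) ?_
    filter_upwards [ae_restrict_mem measurableSet_Ioi] with ρ hρ
    have hρ1 : (1:ℝ) < ρ := hρ
    have hρ0 : (0:ℝ) < ρ := lt_trans one_pos hρ1
    set n := ‖ftR (⇑W) (Real.sqrt ρ • e₁)‖ with hn
    have hn0 : 0 ≤ n := norm_nonneg _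
    have hknorm : ‖Real.sqrt ρ • e₁‖ = Real.sqrt ρ := by
      rw [norm_smul, norm_e₁, mul_one, Real.norm_eq_abs, abs_of_nonneg (Real.sqrt_nonneg ρ)]
    have h1 : Real.sqrt ρ ^ 3 * n ≤ C := by
      have := hC (Real.sqrt ρ • e₁)
      rwa [hknorm] at this
    have hsq3 : (Real.sqrt ρ ^ 3) ^ 2 = ρ ^ 3 := by
      rw [← pow_mul, show 3 * 2 = 2 * 3 from rfl, pow_mul, Real.sq_sqrt hρ0.le]
    have hsq : n ^ 2 * ρ ^ 3 ≤ C ^ 2 := by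
      have := mul_self_le_mul_self (by positivity : 0 ≤ Real.sqrt ρ ^ 3 * n) h1
      nlinarith [hsq3]
    have hrw : ρ ^ (-2:ℝ) = (ρ ^ 2)⁻¹ := by
      rw [show (-2:ℝ) = -((2:ℕ):ℝ) by norm_num, Real.rpow_neg hρ0.le, Real.rpow_natCast]
    have habs : ‖ρ * n ^ 2‖ = ρ * n ^ 2 := by
      rw [Real.norm_eq_abs, abs_of_nonneg (by positivity)]
    rw [habs, hrw, show C ^ 2 * (ρ ^ 2)⁻¹ = C ^ 2 / ρ ^ 2 by ring,
      le_div_iff₀ (by positivity : (0:ℝ) < ρ ^ 2)]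
    nlinarith [hsq]

theorem friction_force_asymptotics
    (W : SchwartzMap E3 ℝ)
    (hWrad : ∀ x y : E3, ‖x‖ = ‖y‖ → W x = W y) :
    -- G is continuous on (0,∞)
    ContinuousOn (G (⇑W)) (Set.Ioi 0) ∧
    -- G(s)/s² → 8|Ŵ(0)|² as s → 0⁺
    Tendsto (fun s : ℝ => G (⇑W) s / s ^ 2) (𝓝[>] 0) (𝓝 (8 * ‖ftR (⇑W) 0‖ ^ 2)) ∧
    -- ∫₀^∞ ρ|Ŵ(√ρ)|² dρ is finite and s²G(s) converges to it as s → ∞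
    IntegrableOn (fun ρ : ℝ => ρ * ‖ftR (⇑W) (Real.sqrt ρ • e₁)‖ ^ 2) (Set.Ioi 0)
      (volume : Measure ℝ) ∧
    Tendsto (fun s : ℝ => s ^ 2 * G (⇑W) s) atTop
      (𝓝 (∫ ρ in Set.Ioi (0:ℝ), ρ * ‖ftR (⇑W) (Real.sqrt ρ • e₁)‖ ^ 2)) := by
  set F : ℝ → ℝ := fun ρ => ρ * ‖ftR (⇑W) (Real.sqrt ρ • e₁)‖ ^ 2 with hFdef
  have hFc : Continuous F := F_cont W
  have hFi : IntegrableOn F (Set.Ioi 0) volume := F_int W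
  have hGdef : ∀ s : ℝ, G (⇑W) s = (1 / s ^ 2) * ∫ ρ in (0:ℝ)..(4*s ^ 2), F ρ := fun s => rfl
  have hJc : Continuous (fun t : ℝ => ∫ ρ in (0:ℝ)..t, F ρ) :=
    intervalIntegral.continuous_primitive (fun a b => hFc.intervalIntegrable a b) 0
  refine ⟨?_, ?_, hFi, ?_⟩
  · -- continuity
    have : ContinuousOn (fun s : ℝ => (1 / s ^ 2) * ∫ ρ in (0:ℝ)..(4*s ^ 2), F ρ)
        (Set.Ioi 0) := by
      refine ContinuousOn.mul ?_ ((hJc.comp (by fun_prop)).continuousOn)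
      exact continuousOn_const.div (continuous_pow 2).continuousOn
        (fun s hs => pow_ne_zero 2 (ne_of_gt hs))
    exact this.congr (fun s _ => hGdef s)
  · -- small s limit
    set L := ‖ftR (⇑W) 0‖ ^ 2 with hL
    have hhc : Continuous (fun ρ : ℝ => ‖ftR (⇑W) (Real.sqrt ρ • e₁)‖ ^ 2) :=
      (((ftR_cont W).comp (Real.continuous_sqrt.smul continuous_const)).norm).pow 2
    rw [Metric.tendsto_nhdsWithin_nhds]
    intro ε hε
    have hcont0 : ContinuousAt (fun ρ : ℝ => ‖ftR (⇑W) (Real.sqrt ρ • e₁)‖ ^ 2) 0 :=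
      hhc.continuousAt
    rw [Metric.continuousAt_iff] at hcont0
    obtain ⟨δ₁, hδ₁, hδprop⟩ := hcont0 (ε/17) (by positivity)
    have hval0 : ‖ftR (⇑W) (Real.sqrt 0 • e₁)‖ ^ 2 = L := by
      rw [Real.sqrt_zero, zero_smul]
    refine ⟨Real.sqrt δ₁ / 2, by positivity, fun s hs hsd => ?_⟩
    have hs0 : (0:ℝ) < s := hs
    rw [Real.dist_eq, sub_zero, abs_of_pos hs0] at hsd
    set T := 4 * s ^ 2 with hT
    have hT0 : 0 < T := by positivity
    have hTδ : T < δ₁ := by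
      have h1 : s < Real.sqrt δ₁ / 2 := hsd
      have h2 : s ^ 2 < (Real.sqrt δ₁ / 2) ^ 2 := by nlinarith
      have h3 : (Real.sqrt δ₁) ^ 2 = δ₁ := Real.sq_sqrt hδ₁.le
      nlinarith
    have hbound : ∀ ρ ∈ Set.uIoc (0:ℝ) T, ‖ρ * (‖ftR (⇑W) (Real.sqrt ρ • e₁)‖ ^ 2 - L)‖
        ≤ T * (ε/17) := by
      intro ρ hρ
      rw [Set.uIoc_of_le hT0.le] at hρ
      have hρ0 : 0 < ρ := hρ.1
      have hρT : ρ ≤ T := hρ.2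
      have hd : dist ρ 0 < δ₁ := by
        rw [Real.dist_eq, sub_zero, abs_of_pos hρ0]; linarith
      have := hδprop hd
      rw [hval0, Real.dist_eq] at this
      rw [Real.norm_eq_abs, abs_mul, abs_of_pos hρ0]
      have h4 : |‖ftR (⇑W) (Real.sqrt ρ • e₁)‖ ^ 2 - L| ≤ ε/17 := this.le
      exact mul_le_mul hρT h4 (abs_nonneg _) hT0.le
    have hIL : ∫ ρ in (0:ℝ)..T, ρ * L = 8 * L * s ^ 4 := by
      rw [intervalIntegral.integral_mul_const, integral_id]
      rw [hT]; ring
    have hsub : (∫ ρ in (0:ℝ)..T, F ρ) - 8 * L * s ^ 4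
        = ∫ ρ in (0:ℝ)..T, ρ * (‖ftR (⇑W) (Real.sqrt ρ • e₁)‖ ^ 2 - L) := by
      have hsubint : ∫ ρ in (0:ℝ)..T, (F ρ - ρ * L)
          = (∫ ρ in (0:ℝ)..T, F ρ) - ∫ ρ in (0:ℝ)..T, ρ * L :=
        intervalIntegral.integral_sub (hFc.intervalIntegrable _ _)
          (Continuous.intervalIntegrable (by fun_prop) _ _)
      rw [← hIL, ← hsubint]
      refine intervalIntegral.integral_congr (fun ρ _ => ?_)
      show F ρ - ρ * L = ρ * (‖ftR (⇑W) (Real.sqrt ρ • e₁)‖ ^ 2 - L)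
      rw [hFdef]; ring
    have hnormint : ‖∫ ρ in (0:ℝ)..T, ρ * (‖ftR (⇑W) (Real.sqrt ρ • e₁)‖ ^ 2 - L)‖
        ≤ T * (ε/17) * |T - 0| :=
      intervalIntegral.norm_integral_le_of_norm_le_const hbound
    have hs4 : (0:ℝ) < s ^ 4 := by positivity
    have hkey : |(∫ ρ in (0:ℝ)..T, F ρ) - 8 * L * s ^ 4| ≤ 16 * s ^ 4 * (ε/17) := by
      rw [hsub]
      have : T * (ε/17) * |T - 0| = 16 * s ^ 4 * (ε/17) := by
        rw [sub_zero, abs_of_pos hT0, hT]; ring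
      rw [← this]
      exact hnormint
    have hGs : G (⇑W) s / s ^ 2 - 8 * L = ((∫ ρ in (0:ℝ)..T, F ρ) - 8 * L * s ^ 4) / s ^ 4 := by
      rw [hGdef s, ← hT]
      field_simp
    rw [Real.dist_eq, hGs, abs_div, abs_of_pos hs4]
    have hfinal : |(∫ ρ in (0:ℝ)..T, F ρ) - 8 * L * s ^ 4| / s ^ 4 ≤ 16 * (ε/17) := by
      rw [div_le_iff₀ hs4]
      nlinarith [hkey]
    linarith
  · -- large s limit
    have htend : Tendsto (fun s : ℝ => 4 * s ^ 2) atTop atTop :=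
      (tendsto_pow_atTop (two_ne_zero)).const_mul_atTop (by norm_num)
    have h4 : Tendsto (fun s : ℝ => ∫ ρ in (0:ℝ)..(4 * s ^ 2), F ρ) atTop
        (𝓝 (∫ ρ in Set.Ioi (0:ℝ), F ρ)) :=
      intervalIntegral_tendsto_integral_Ioi 0 hFi htend
    refine Tendsto.congr' ?_ h4
    filter_upwards [eventually_ge_atTop (1:ℝ)] with s hs
    have hs0 : s ≠ 0 := by linarith
    rw [hGdef s]
    field_simp
end
end

section
/- ODE lemma for the decelerating particle. Let u₀ > 0 and let h : [0, u₀] → ℝ be continuous with h(u) > 0 for u ∈ (0, u₀] and lim_{u→0⁺} h(u)/u² = C for some constant C > 0. Let u : [0,∞) → (0, u₀] be differentiable with u̇(t) = −h(u(t)) for all t ≥ 0. Then u is strictly decreasing, u(t) → 0 as t → ∞, and t · u(t) → 1/C as t → ∞; in particular u(t) ∼ ⟨t⟩^{−1}. -/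
/- STATEMENT 13: ODE lemma for the decelerating particle.
Let u₀ > 0 and h : [0,u₀] → ℝ continuous with h > 0 on (0,u₀] and h(u)/u² → C > 0 as
u → 0⁺.  If u : [0,∞) → (0,u₀] is differentiable with u̇ = −h(u), then u is strictly
decreasing, u(t) → 0, and t·u(t) → 1/C as t → ∞ (so u(t) ∼ ⟨t⟩⁻¹). -/

open Filter Topology

lemma aux_div_tendsto (w w' : ℝ → ℝ) (C : ℝ)
    (hw : ∀ t ∈ Set.Ioi (0:ℝ), HasDerivAt w (w' t) t)
    (hlim : Tendsto w' atTop (𝓝 C)) :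
    Tendsto (fun t => w t / t) atTop (𝓝 C) := by
  rw [Metric.tendsto_nhds]
  intro ε hε
  have hε2 : 0 < ε / 2 := by linarith
  obtain ⟨T, hT1, hTb⟩ : ∃ T : ℝ, 1 ≤ T ∧ ∀ t, T ≤ t → |w' t - C| < ε / 2 := by
    obtain ⟨T₀, hT₀⟩ := (Metric.tendsto_nhds.1 hlim (ε/2) hε2).exists_forall_of_atTop
    refine ⟨max T₀ 1, le_max_right _ _, fun t ht => ?_⟩
    have := hT₀ t (le_trans (le_max_left _ _) ht)
    rwa [Real.dist_eq] at this
  have hTpos : (0:ℝ) < T := lt_of_lt_of_le one_pos hT1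
  have hwd : ∀ t ∈ Set.Ici T, HasDerivAt w (w' t) t := fun t ht =>
    hw t (lt_of_lt_of_le hTpos ht)
  have hwc : ContinuousOn w (Set.Ici T) := fun t ht =>
    ((hwd t ht).continuousAt).continuousWithinAt
  -- upper bound
  have hub : ∀ t, T ≤ t → w t ≤ w T + (C + ε/2) * (t - T) := by
    intro t ht
    have hmono : MonotoneOn (fun s => (C + ε/2) * s - w s) (Set.Ici T) := by
      apply monotoneOn_of_deriv_nonneg (convex_Ici T)
      · exact (continuousOn_const.mul continuousOn_id).sub hwc
      · intro s hs
        rw [interior_Ici] at hs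
        exact (((hasDerivAt_id s).const_mul (C + ε/2)).sub (hwd s (Set.mem_Ici.2 hs.le))).differentiableAt.differentiableWithinAt
      · intro s hs
        rw [interior_Ici] at hs
        have hd : HasDerivAt (fun s => (C + ε/2) * s - w s) ((C + ε/2) * 1 - w' s) s :=
          ((hasDerivAt_id s).const_mul (C + ε/2)).sub (hwd s (Set.mem_Ici.2 hs.le))
        rw [hd.deriv]
        have := abs_lt.1 (hTb s hs.le)
        linarith [this.1, this.2]
    have := hmono (Set.self_mem_Ici) (Set.mem_Ici.2 ht) ht
    simp only at this
    linarith
  -- lower bound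
  have hlb : ∀ t, T ≤ t → w T + (C - ε/2) * (t - T) ≤ w t := by
    intro t ht
    have hmono : MonotoneOn (fun s => w s - (C - ε/2) * s) (Set.Ici T) := by
      apply monotoneOn_of_deriv_nonneg (convex_Ici T)
      · exact hwc.sub (continuousOn_const.mul continuousOn_id)
      · intro s hs
        rw [interior_Ici] at hs
        exact ((hwd s (Set.mem_Ici.2 hs.le)).sub ((hasDerivAt_id s).const_mul (C - ε/2))).differentiableAt.differentiableWithinAt
      · intro s hs
        rw [interior_Ici] at hs
        have hd : HasDerivAt (fun s => w s - (C - ε/2) * s) (w' s - (C - ε/2) * 1) s :=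
          (hwd s (Set.mem_Ici.2 hs.le)).sub ((hasDerivAt_id s).const_mul (C - ε/2))
        rw [hd.deriv]
        have := abs_lt.1 (hTb s hs.le)
        linarith [this.1, this.2]
    have := hmono (Set.self_mem_Ici) (Set.mem_Ici.2 ht) ht
    simp only at this
    linarith
  -- finish
  obtain ⟨A, hA⟩ : ∃ A : ℝ, A = |w T| + (|C| + ε/2) * T + 1 := ⟨_, rfl⟩
  filter_upwards [eventually_ge_atTop T, eventually_ge_atTop (2 * A / ε)] with t ht hA2
  have htpos : 0 < t := lt_of_lt_of_le hTpos ht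
  have hεt : 2 * A ≤ ε * t := by
    rw [div_le_iff₀ hε] at hA2; linarith
  have h1 := hub t ht
  have h2 := hlb t ht
  have habs : |w T| + |C + ε/2| * T ≤ A - 1 + ε * T := by
    have : |C + ε/2| ≤ |C| + ε/2 := by
      calc |C + ε/2| ≤ |C| + |ε/2| := abs_add_le _ _
      _ = |C| + ε/2 := by rw [abs_of_pos hε2]
    nlinarith [abs_nonneg (w T), hTpos]
  rw [Real.dist_eq, abs_sub_lt_iff]
  constructor
  · rw [sub_lt_iff_lt_add, div_lt_iff₀ htpos]
    nlinarith [h1, hεt, hA, le_abs_self (w T), mul_le_mul_of_nonneg_right (neg_abs_le C) hTpos.le,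
      mul_nonneg hε2.le hTpos.le]
  · rw [sub_lt_comm, lt_div_iff₀ htpos]
    nlinarith [h2, hεt, hA, neg_abs_le (w T), mul_le_mul_of_nonneg_right (le_abs_self C) hTpos.le,
      mul_nonneg hε2.le hTpos.le]

theorem decelerating_particle_ode
    (u₀ C : ℝ) (hu₀ : 0 < u₀) (hC : 0 < C)
    (h : ℝ → ℝ)
    (hcont : ContinuousOn h (Set.Icc 0 u₀))
    (hpos : ∀ u ∈ Set.Ioc (0:ℝ) u₀, 0 < h u)
    (hlim : Tendsto (fun u : ℝ => h u / u ^ 2) (𝓝[>] 0) (𝓝 C))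
    (u : ℝ → ℝ)
    (hrange : ∀ t ∈ Set.Ici (0:ℝ), u t ∈ Set.Ioc 0 u₀)
    (hode : ∀ t ∈ Set.Ici (0:ℝ), HasDerivWithinAt u (-h (u t)) (Set.Ici 0) t) :
    StrictAntiOn u (Set.Ici 0) ∧
    Tendsto u atTop (𝓝 0) ∧
    Tendsto (fun t : ℝ => t * u t) atTop (𝓝 (1 / C)) := by
  -- continuity of u on [0, ∞)
  have hucont : ContinuousOn u (Set.Ici 0) := fun t ht => (hode t ht).continuousWithinAt
  have hderiv : ∀ t ∈ Set.Ioi (0:ℝ), HasDerivAt u (-h (u t)) t := fun t ht =>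
    (hode t (Set.mem_Ici.2 (le_of_lt ht))).hasDerivAt (Ici_mem_nhds ht)
  -- Part 1: strictly decreasing
  have hanti : StrictAntiOn u (Set.Ici 0) := by
    apply strictAntiOn_of_deriv_neg (convex_Ici 0) hucont
    intro t ht
    rw [interior_Ici] at ht
    rw [(hderiv t ht).deriv]
    exact neg_lt_zero.mpr (hpos _ (hrange t (Set.mem_Ici.2 (le_of_lt ht))))
  have hantiOn : AntitoneOn u (Set.Ici 0) := hanti.antitoneOn
  have hupos : ∀ t : ℝ, 0 ≤ t → 0 < u t := fun t ht => (hrange t ht).1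
  -- Part 2: tends to a limit L
  have hfanti : Antitone (fun t => u (max t 0)) := fun s t hst =>
    hantiOn (le_max_right s 0) (le_max_right t 0) (max_le_max hst le_rfl)
  have hbdd : BddBelow (Set.range fun t => u (max t 0)) := by
    refine ⟨0, fun x hx => ?_⟩
    obtain ⟨t, rfl⟩ := hx
    exact (hupos _ (le_max_right t 0)).le
  obtain ⟨L, hLtend⟩ : ∃ L, Tendsto (fun t => u (max t 0)) atTop (𝓝 L) :=
    ⟨_, tendsto_atTop_ciInf hfanti hbdd⟩
  have hfeq : (fun t => u (max t 0)) =ᶠ[atTop] u := by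
    filter_upwards [eventually_ge_atTop (0:ℝ)] with t ht
    simp [max_eq_left ht]
  have hutend : Tendsto u atTop (𝓝 L) := hLtend.congr' hfeq
  have hLle : ∀ t : ℝ, 0 ≤ t → L ≤ u t := by
    intro t ht
    apply le_of_tendsto hutend
    filter_upwards [eventually_ge_atTop t] with s hs
    exact hantiOn ht (le_trans ht hs) hs
  -- the limit is 0
  have hL0 : L = 0 := by
    by_contra hL
    have hLnn : 0 ≤ L := by
      apply ge_of_tendsto hutend
      filter_upwards [eventually_ge_atTop (0:ℝ)] with s hs
      exact (hupos s hs).le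
    have hLpos : 0 < L := lt_of_le_of_ne hLnn (Ne.symm hL)
    have hLu₀ : L ≤ u₀ := le_trans (hLle 0 le_rfl) (hrange 0 Set.self_mem_Ici).2
    obtain ⟨m, hm, hmin⟩ := isCompact_Icc.exists_isMinOn (Set.nonempty_Icc.2 hLu₀)
      (hcont.mono (Set.Icc_subset_Icc hLpos.le le_rfl))
    have hδ : 0 < h m := hpos m ⟨lt_of_lt_of_le hLpos hm.1, hm.2⟩
    have hmem : ∀ t : ℝ, 0 ≤ t → u t ∈ Set.Icc L u₀ := fun t ht => ⟨hLle t ht, (hrange t ht).2⟩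
    have hganti : AntitoneOn (fun t => u t + h m * t) (Set.Ici 0) := by
      apply antitoneOn_of_deriv_nonpos (convex_Ici 0)
      · exact hucont.add (continuous_const.mul continuous_id).continuousOn
      · intro t ht
        rw [interior_Ici] at ht
        exact ((hderiv t ht).add
          ((hasDerivAt_id t).const_mul (h m))).differentiableAt.differentiableWithinAt
      · intro t ht
        rw [interior_Ici] at ht
        have hd : HasDerivAt (fun t => u t + h m * t) (-h (u t) + h m * 1) t :=
          (hderiv t ht).add ((hasDerivAt_id t).const_mul (h m))
        rw [hd.deriv]
        have hle : h m ≤ h (u t) := isMinOn_iff.1 hmin (u t) (hmem t ht.le)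
        linarith
    have ht₁pos : 0 < u 0 / h m := div_pos (hupos 0 le_rfl) hδ
    have hcontr := hganti Set.self_mem_Ici (Set.mem_Ici.2 ht₁pos.le) ht₁pos.le
    simp only [mul_zero, add_zero] at hcontr
    rw [mul_div_cancel₀ _ (ne_of_gt hδ)] at hcontr
    have := hupos (u 0 / h m) ht₁pos.le
    linarith
  rw [hL0] at hutend
  -- Part 3: t * u t → 1/C
  have hu' : Tendsto u atTop (𝓝[>] 0) := by
    rw [tendsto_nhdsWithin_iff]
    refine ⟨hutend, ?_⟩
    filter_upwards [eventually_ge_atTop (0:ℝ)] with t ht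
    exact hupos t ht
  have hw'lim : Tendsto (fun t => h (u t) / (u t) ^ 2) atTop (𝓝 C) := hlim.comp hu'
  have hwderiv : ∀ t ∈ Set.Ioi (0:ℝ), HasDerivAt (fun s => (u s)⁻¹) (h (u t) / (u t) ^ 2) t := by
    intro t ht
    have h1 := (hderiv t ht).inv (ne_of_gt (hupos t ht.le))
    convert h1 using 1
    · rfl
    · rfl
    · rfl
    ring
  have hq : Tendsto (fun t => (u t)⁻¹ / t) atTop (𝓝 C) :=
    aux_div_tendsto _ _ C hwderiv hw'lim
  have hq' : Tendsto (fun t => ((u t)⁻¹ / t)⁻¹) atTop (𝓝 C⁻¹) := hq.inv₀ (ne_of_gt hC)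
  refine ⟨hanti, hutend, ?_⟩
  rw [one_div]
  apply hq'.congr'
  filter_upwards [eventually_gt_atTop (0:ℝ)] with t ht
  rw [inv_div, div_eq_mul_inv, inv_inv]
end
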